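/- For all natural numbers n, m: B_{s,q}[n+m] = Σ_{r=0}^{n} Σ_{j=0}^{m} S_{s,q}[m,j] · q^{r(j(1−s)+sm)} · binom(n,r)_{q^s} · B_{s,q}[r] · Π_{i=0}^{n−r−1} [j(1−s) + sm + s·i]_q. (Generalized Spivey formula for generalized Bell numbers.) -/

import Mathlib

/-!
Let `V_a = shiftedStirling s q a` solve the recursion of `S_{s,q}` with every argument of `q^·`
and `[·]_q` raised by `a`, where column `0` is not set to zero but obeys the same recursion
without its `q^·` term. Since `[0]_q = 0`, `S_{s,q} = V_0`.

Running the recursion of `S_{s,q}[n+m, ·]` down to row `m`, the entry `S_{s,q}[m,j]` starts a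
copy of the recursion whose arguments are raised by `j(1-s) + sm`, so
`S_{s,q}[n+m,k] = ∑_j S_{s,q}[m,j] V_{j(1-s)+sm}[n,k-j]`.
The shift is then removed again: by induction on `n`, using q-Pascal for `binom(·,·)_{q^s}`
and `[x+y]_q = [x]_q + q^x [y]_q`,
`V_a[n,l] = ∑_r q^{ra} binom(n,r)_{q^s} S_{s,q}[r,l] ∏_{i<n-r} [a+si]_q`.
Summing over the columns gives the formula.
-/

/-- The `q`-bracket `[t]_q = (q^t - 1)/(q - 1)` (real exponentiation). -/
noncomputable def qBracket (q t : ℝ) : ℝ := (q ^ t - 1) / (q - 1)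

open Classical in
/-- The `Q`-binomial coefficient: the sum of `Q^(t₁+⋯+t_{n-k})` over all weakly
increasing integer tuples `0 ≤ t₁ ≤ ⋯ ≤ t_{n-k} ≤ k` when `k ≤ n`, and `0` when `k > n`. -/
noncomputable def qBinom (Q : ℝ) (n k : ℕ) : ℝ :=
  if k ≤ n then
    ∑ f ∈ Finset.univ.filter (fun f : Fin (n - k) → Fin (k + 1) => Monotone f),
      Q ^ (∑ i, (f i : ℕ))
  else 0

/-- The generalized `q`-Stirling numbers `S_{s,q}[n,k]` of Goldman–Haglund type. -/
noncomputable def genStirling (s q : ℝ) : ℕ → ℕ → ℝ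
  | 0, 0 => 1
  | 0, _ + 1 => 0
  | _ + 1, 0 => 0
  | n + 1, k + 1 =>
    if k + 1 ≤ n + 1 then
      q ^ (s * (n : ℝ) - (s - 1) * (k : ℝ)) * genStirling s q n k
        + qBracket q (s * (n : ℝ) - (s - 1) * ((k : ℝ) + 1)) * genStirling s q n (k + 1)
    else 0

/-- The generalized Bell number `B_{s,q}[n]`. -/
noncomputable def genBell (s q : ℝ) (n : ℕ) : ℝ :=
  ∑ k ∈ Finset.range (n + 1), genStirling s q n k

open Finset

lemma Fin.monotone_cons {α : Type*} [Preorder α] {d : ℕ} {a : α} {f : Fin d → α} :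
    Monotone (Fin.cons a f : Fin (d + 1) → α) ↔ (∀ i, a ≤ f i) ∧ Monotone f := by
  simpa only [monotone_iff_forall_lt, Relator.LiftFun] using Fin.liftFun_cons (α := α) (· ≤ ·)

lemma Finset.sum_range_diag_eq_of_support {M : Type*} [AddCommMonoid M] {m n : ℕ}
    {g : ℕ → ℕ → M} (hm : ∀ j l, m < j → g j l = 0) (hn : ∀ j l, n < l → g j l = 0) :
    ∑ k ∈ range (m + n + 1), ∑ j ∈ range (k + 1), g j (k - j)
      = ∑ j ∈ range (m + 1), ∑ l ∈ range (n + 1), g j l := by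
  rw [sum_range_diag_flip, ← sum_subset (range_subset_range.2 (by omega : m + 1 ≤ m + n + 1))]
  · refine sum_congr rfl fun j hj => (sum_subset (range_subset_range.2 ?_) fun l _ hl => ?_).symm
    · have := mem_range.1 hj
      omega
    · exact hn j l (by simpa using hl)
  · exact fun j _ hj => sum_eq_zero fun l _ => hm j l (by simpa using hj)

lemma qBracket_zero (q : ℝ) : qBracket q 0 = 0 := by
  simp [qBracket]

lemma qBracket_add {q : ℝ} (hq : 0 < q) (x y : ℝ) :
    qBracket q (x + y) = qBracket q x + q ^ x * qBracket q y := by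
  simp only [qBracket, Real.rpow_add hq]
  ring

-- `open Classical` as in `qBinom`, so that the two filters agree and `qBinom_of_le` is `if_pos`.
open Classical in
noncomputable def monotoneTupleSum (Q : ℝ) (d k : ℕ) : ℝ :=
  ∑ f ∈ univ.filter (fun f : Fin d → Fin (k + 1) => Monotone f), Q ^ (∑ i, (f i : ℕ))

lemma monotoneTupleSum_zero_left (Q : ℝ) (k : ℕ) : monotoneTupleSum Q 0 k = 1 := by
  simp [monotoneTupleSum, Subsingleton.monotone]

lemma monotoneTupleSum_zero_right (Q : ℝ) (d : ℕ) : monotoneTupleSum Q d 0 = 1 := by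
  simp [monotoneTupleSum, filter_singleton, monotone_const]

lemma monotoneTupleSum_succ_succ (Q : ℝ) (d k : ℕ) :
    monotoneTupleSum Q (d + 1) (k + 1)
      = Q ^ (d + 1) * monotoneTupleSum Q (d + 1) k + monotoneTupleSum Q d (k + 1) := by
  unfold monotoneTupleSum
  -- a tuple not starting at `0` is `Fin.succ ∘ g`, one starting at `0` is `Fin.cons 0 g`
  rw [← sum_filter_add_sum_filter_not _ (fun f => f 0 ≠ 0)]
  congr 1
  · rw [mul_sum]
    refine (sum_nbij' (fun g => Fin.succ ∘ g) (fun f => Fin.predAbove 0 ∘ f)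
      ?_ ?_ ?_ ?_ ?_).symm
    · intro g hg
      simp only [mem_filter, mem_univ, true_and] at hg ⊢
      exact ⟨Fin.strictMono_succ.monotone.comp hg, Fin.succ_ne_zero _⟩
    · intro f hf
      simp only [mem_filter, mem_univ, true_and] at hf ⊢
      exact (Fin.predAbove_right_monotone 0).comp hf.1
    · intro g _
      funext i
      exact Fin.predAbove_zero_succ
    · intro f hf
      simp only [mem_filter, mem_univ, true_and] at hf
      funext i
      exact Fin.succ_predAbove_zero fun hi => hf.2 (Fin.le_zero_iff.1 (hi ▸ hf.1 (Fin.zero_le i)))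
    · intro g _
      simp [Fin.val_succ, sum_add_distrib, pow_add, mul_comm]
  · refine (sum_nbij' (Fin.cons 0) Fin.tail ?_ ?_ ?_ ?_ ?_).symm
    · intro g hg
      simp only [mem_filter, mem_univ, true_and, not_not] at hg ⊢
      exact ⟨Fin.monotone_cons.2 ⟨fun i => Fin.zero_le _, hg⟩, Fin.cons_zero _ _⟩
    · intro f hf
      simp only [mem_filter, mem_univ, true_and, not_not] at hf ⊢
      exact hf.1.comp Fin.strictMono_succ.monotone
    · intro g _
      exact Fin.tail_cons _ _
    · intro f hf
      simp only [mem_filter, mem_univ, true_and, not_not] at hf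
      rw [← hf.2]
      exact Fin.cons_self_tail f
    · intro g _
      simp [Fin.sum_univ_succ]

lemma qBinom_of_le (Q : ℝ) {n k : ℕ} (h : k ≤ n) : qBinom Q n k = monotoneTupleSum Q (n - k) k :=
  if_pos h

lemma qBinom_of_lt (Q : ℝ) {n k : ℕ} (h : n < k) : qBinom Q n k = 0 :=
  if_neg (Nat.not_le.mpr h)

lemma qBinom_zero_right (Q : ℝ) (n : ℕ) : qBinom Q n 0 = 1 := by
  rw [qBinom_of_le Q (Nat.zero_le n), monotoneTupleSum_zero_right]

lemma qBinom_succ_succ (Q : ℝ) {n r : ℕ} (h : r ≤ n) :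
    qBinom Q (n + 1) (r + 1) = Q ^ (n - r) * qBinom Q n r + qBinom Q n (r + 1) := by
  obtain ⟨d, rfl⟩ := Nat.exists_eq_add_of_le h
  rw [qBinom_of_le Q (by omega), qBinom_of_le Q h, Nat.add_sub_cancel_left,
    show r + d + 1 - (r + 1) = d by omega]
  cases d with
  | zero =>
    rw [qBinom_of_lt Q (by omega), monotoneTupleSum_zero_left, monotoneTupleSum_zero_left]
    ring
  | succ d =>
    rw [qBinom_of_le Q (by omega), show r + (d + 1) - (r + 1) = d by omega,
      monotoneTupleSum_succ_succ]

lemma sum_qBinom_succ_mul (Q : ℝ) (n : ℕ) (f : ℕ → ℝ) :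
    ∑ r ∈ range (n + 2), qBinom Q (n + 1) r * f r
      = ∑ r ∈ range (n + 1), qBinom Q n r * (f r + Q ^ (n - r) * f (r + 1)) := by
  have hshift : ∑ r ∈ range (n + 1), qBinom Q n r * f r
      = ∑ r ∈ range (n + 1), qBinom Q n (r + 1) * f (r + 1) + f 0 := by
    rw [sum_range_succ', sum_range_succ (fun r => qBinom Q n (r + 1) * f (r + 1)),
      qBinom_of_lt Q (Nat.lt_succ_self n), qBinom_zero_right]
    ring
  have hpascal : ∀ r ∈ range (n + 1), qBinom Q (n + 1) (r + 1) * f (r + 1)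
      = qBinom Q n r * (Q ^ (n - r) * f (r + 1)) + qBinom Q n (r + 1) * f (r + 1) := by
    intro r hr
    rw [qBinom_succ_succ Q (mem_range_succ_iff.mp hr)]
    ring
  rw [sum_range_succ', qBinom_zero_right, sum_congr rfl hpascal]
  simp only [mul_add, sum_add_distrib, hshift]
  ring

lemma pascal_weight_identity {q s : ℝ} (hq : 0 < q) (a : ℝ) {n r : ℕ} (h : r ≤ n) (l : ℕ)
    (x y : ℝ) :
    q ^ (r * a) * y * qBracket q (a + s * ((n - r : ℕ) : ℝ))
      + (q ^ s) ^ (n - r) * (q ^ (((r + 1 : ℕ) : ℝ) * a) *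
          (q ^ (0 + s * r - (s - 1) * l) * x + qBracket q (0 + s * r - (s - 1) * (l + 1)) * y))
      = q ^ (a + s * n - (s - 1) * l) * (q ^ (r * a) * x)
        + qBracket q (a + s * n - (s - 1) * (l + 1)) * (q ^ (r * a) * y) := by
  have hcast : ((n - r : ℕ) : ℝ) = n - r := Nat.cast_sub h
  have hQ : (q ^ s) ^ (n - r) = q ^ (s * ((n - r : ℕ) : ℝ)) := by
    rw [← Real.rpow_natCast, ← Real.rpow_mul hq.le]
  have hpow : q ^ (((r + 1 : ℕ) : ℝ) * a) * q ^ (s * ((n - r : ℕ) : ℝ))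
        * q ^ (0 + s * r - (s - 1) * l)
      = q ^ (a + s * n - (s - 1) * l) * q ^ (r * a) := by
    simp only [← Real.rpow_add hq]
    congr 1
    push_cast [hcast]
    ring
  have hshift : q ^ (((r + 1 : ℕ) : ℝ) * a) * q ^ (s * ((n - r : ℕ) : ℝ))
      = q ^ (r * a) * q ^ (a + s * ((n - r : ℕ) : ℝ)) := by
    simp only [← Real.rpow_add hq]
    congr 1
    push_cast
    ring
  have hbracket : qBracket q (a + s * n - (s - 1) * (l + 1))
      = qBracket q (a + s * ((n - r : ℕ) : ℝ))
        + q ^ (a + s * ((n - r : ℕ) : ℝ)) * qBracket q (0 + s * r - (s - 1) * (l + 1)) := by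
    rw [← qBracket_add hq, hcast]
    ring_nf
  rw [hQ, hbracket]
  linear_combination x * hpow + y * qBracket q (0 + s * r - (s - 1) * (l + 1)) * hshift

noncomputable def shiftedStirling (s q a : ℝ) : ℕ → ℕ → ℝ
  | 0, 0 => 1
  | 0, _ + 1 => 0
  | n + 1, 0 => qBracket q (a + s * n) * shiftedStirling s q a n 0
  | n + 1, l + 1 =>
      q ^ (a + s * n - (s - 1) * l) * shiftedStirling s q a n l
        + qBracket q (a + s * n - (s - 1) * (l + 1)) * shiftedStirling s q a n (l + 1)

namespace shiftedStirling

variable {s q : ℝ}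

lemma succ_succ (a : ℝ) (n l : ℕ) :
    shiftedStirling s q a (n + 1) (l + 1)
      = q ^ (a + s * n - (s - 1) * l) * shiftedStirling s q a n l
        + qBracket q (a + s * n - (s - 1) * (l + 1)) * shiftedStirling s q a n (l + 1) := rfl

lemma of_lt {a : ℝ} : ∀ {n l : ℕ}, n < l → shiftedStirling s q a n l = 0
  | 0, _ + 1, _ => rfl
  | n + 1, l + 1, h => by
    rw [succ_succ, of_lt (by omega), of_lt (by omega), mul_zero, mul_zero, add_zero]

lemma zero_right (a : ℝ) (n : ℕ) :
    shiftedStirling s q a n 0 = ∏ i ∈ range n, qBracket q (a + s * i) := by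
  induction n with
  | zero => rfl
  | succ n ih => rw [prod_range_succ, ← ih, mul_comm]; rfl

lemma succ_sub_of_le (a : ℝ) (m n : ℕ) {j k : ℕ} (h : j ≤ k) :
    shiftedStirling s q (a + (j * (1 - s) + s * m)) (n + 1) (k + 1 - j)
      = q ^ (a + s * ((n + m : ℕ) : ℝ) - (s - 1) * k) *
          shiftedStirling s q (a + (j * (1 - s) + s * m)) n (k - j)
        + qBracket q (a + s * ((n + m : ℕ) : ℝ) - (s - 1) * (k + 1)) *
          shiftedStirling s q (a + (j * (1 - s) + s * m)) n (k + 1 - j) := by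
  have hpow : a + (j * (1 - s) + s * m) + s * n - (s - 1) * ((k - j : ℕ) : ℝ)
      = a + s * ((n + m : ℕ) : ℝ) - (s - 1) * k := by
    push_cast [Nat.cast_sub h]
    ring
  have hbracket : a + (j * (1 - s) + s * m) + s * n - (s - 1) * (((k - j : ℕ) : ℝ) + 1)
      = a + s * ((n + m : ℕ) : ℝ) - (s - 1) * (k + 1) := by
    push_cast [Nat.cast_sub h]
    ring
  rw [show k + 1 - j = k - j + 1 by omega, succ_succ, hpow, hbracket]

theorem add_eq_sum (a : ℝ) (m n k : ℕ) :
    shiftedStirling s q a (n + m) k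
      = ∑ j ∈ range (k + 1), shiftedStirling s q a m j *
          shiftedStirling s q (a + (j * (1 - s) + s * m)) n (k - j) := by
  induction n generalizing k with
  | zero =>
    rw [zero_add, sum_eq_single_of_mem k (self_mem_range_succ k)]
    · rw [Nat.sub_self]
      exact (mul_one _).symm
    · intro j hj hjk
      rw [of_lt (n := 0) (by have := mem_range.mp hj; omega), mul_zero]
  | succ n ih =>
    rw [Nat.add_right_comm]
    cases k with
    | zero =>
      have hshift : a + s * ((n + m : ℕ) : ℝ) = a + (((0 : ℕ) : ℝ) * (1 - s) + s * m) + s * n := by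
        push_cast
        ring
      have h := ih 0
      rw [sum_range_one, Nat.sub_self] at h ⊢
      change qBracket q _ * _ = _ * (qBracket q _ * _)
      rw [h, hshift]
      ring
    | succ k =>
      have hlast : a + (((k + 1 : ℕ) : ℝ) * (1 - s) + s * m) + s * n
          = a + s * ((n + m : ℕ) : ℝ) - (s - 1) * (k + 1) := by
        push_cast
        ring
      rw [succ_succ, ih k, ih (k + 1), sum_range_succ _ (k + 1), sum_range_succ _ (k + 1),
        Nat.sub_self, mul_add, mul_sum, mul_sum, ← add_assoc, ← sum_add_distrib]
      congr 1
      · refine sum_congr rfl fun j hj => ?_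
        rw [succ_sub_of_le a m n (mem_range_succ_iff.mp hj)]
        ring
      · change _ = _ * (qBracket q _ * _)
        rw [hlast]
        ring

theorem eq_sum_qBinom (hq : 0 < q) (a : ℝ) (n l : ℕ) :
    shiftedStirling s q a n l
      = ∑ r ∈ range (n + 1), qBinom (q ^ s) n r * (q ^ (r * a) * shiftedStirling s q 0 r l *
          ∏ i ∈ range (n - r), qBracket q (a + s * i)) := by
  induction n generalizing l with
  | zero =>
    rw [sum_range_one, qBinom_zero_right]
    cases l <;> simp [shiftedStirling]
  | succ n ih =>
    cases l with
    | zero =>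
      rw [sum_eq_single_of_mem 0 (mem_range.mpr (by omega)), zero_right, zero_right]
      · simp [qBinom_zero_right]
      · intro r _ hr
        obtain ⟨r, rfl⟩ := Nat.exists_eq_succ_of_ne_zero hr
        rw [zero_right, prod_range_succ']
        simp [qBracket_zero]
    | succ l =>
      rw [succ_succ, ih l, ih (l + 1), mul_sum, mul_sum, ← sum_add_distrib, sum_qBinom_succ_mul]
      refine sum_congr rfl fun r hr => ?_
      have hrn : r ≤ n := mem_range_succ_iff.mp hr
      rw [Nat.add_sub_add_right, show n + 1 - r = n - r + 1 by omega, prod_range_succ, succ_succ]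
      linear_combination -(qBinom (q ^ s) n r * ∏ i ∈ range (n - r), qBracket q (a + s * i)) *
        pascal_weight_identity hq a hrn l
          (shiftedStirling s q 0 r l) (shiftedStirling s q 0 r (l + 1))

end shiftedStirling

lemma genStirling_eq_shiftedStirling (s q : ℝ) : genStirling s q = shiftedStirling s q 0 := by
  funext n k
  induction n generalizing k with
  | zero => cases k <;> rfl
  | succ n ih =>
    cases k with
    | zero =>
      rw [shiftedStirling.zero_right, prod_range_succ']
      simp [genStirling, qBracket_zero]
    | succ k =>
      by_cases hk : k ≤ n
      · simp [genStirling, shiftedStirling.succ_succ, ih, hk]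
      · rw [genStirling, if_neg (by omega), shiftedStirling.of_lt (by omega)]

lemma genBell_eq_sum_shiftedStirling (s q : ℝ) {r N : ℕ} (h : r < N) :
    genBell s q r = ∑ l ∈ range N, shiftedStirling s q 0 r l := by
  rw [genBell, genStirling_eq_shiftedStirling]
  exact sum_subset (range_subset_range.2 h) fun l _ hl =>
    shiftedStirling.of_lt (by simpa using hl)

theorem genBell_add_eq_sum (s q : ℝ) (m n : ℕ) :
    genBell s q (n + m) = ∑ j ∈ range (m + 1), genStirling s q m j *
      ∑ l ∈ range (n + 1), shiftedStirling s q (j * (1 - s) + s * m) n l := by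
  rw [genBell_eq_sum_shiftedStirling s q (Nat.lt_add_one _), genStirling_eq_shiftedStirling]
  simp only [shiftedStirling.add_eq_sum 0 m n, zero_add, mul_sum]
  rw [show n + m + 1 = m + n + 1 by omega]
  apply sum_range_diag_eq_of_support (g := fun j l =>
    shiftedStirling s q 0 m j * shiftedStirling s q (j * (1 - s) + s * m) n l)
  · intro j l h
    rw [shiftedStirling.of_lt h, zero_mul]
  · intro j l h
    rw [shiftedStirling.of_lt h, mul_zero]

theorem sum_shiftedStirling_eq_sum_genBell {s q : ℝ} (hq : 0 < q) (a : ℝ) (n : ℕ) :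
    ∑ l ∈ range (n + 1), shiftedStirling s q a n l
      = ∑ r ∈ range (n + 1), qBinom (q ^ s) n r *
          (q ^ (r * a) * genBell s q r * ∏ i ∈ range (n - r), qBracket q (a + s * i)) := by
  simp only [shiftedStirling.eq_sum_qBinom hq a n]
  rw [sum_comm]
  refine sum_congr rfl fun r hr => ?_
  rw [genBell_eq_sum_shiftedStirling s q (mem_range.1 hr), ← mul_sum, ← sum_mul, ← mul_sum]

theorem spivey_bell_general (q s : ℝ) (hq : 0 < q) (n m : ℕ) :
    genBell s q (n + m)
    = ∑ r ∈ Finset.range (n + 1), ∑ j ∈ Finset.range (m + 1),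
        genStirling s q m j * q ^ ((r : ℝ) * ((j : ℝ) * (1 - s) + s * (m : ℝ))) *
          qBinom (q ^ s) n r * genBell s q r *
          ∏ i ∈ Finset.range (n - r),
            qBracket q ((j : ℝ) * (1 - s) + s * (m : ℝ) + s * (i : ℝ)) := by
  simp only [genBell_add_eq_sum, sum_shiftedStirling_eq_sum_genBell hq, mul_sum]
  rw [sum_comm]
  refine sum_congr rfl fun r _ => sum_congr rfl fun j _ => ?_
  ring

/-- Generalized Spivey formula for generalized Bell numbers. -/
theorem spivey_bell (q s : ℝ) (hq : 0 < q) (hq1 : q ≠ 1) (n m : ℕ) :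
    genBell s q (n + m)
    = ∑ r ∈ Finset.range (n + 1), ∑ j ∈ Finset.range (m + 1),
        genStirling s q m j * q ^ ((r : ℝ) * ((j : ℝ) * (1 - s) + s * (m : ℝ))) *
          qBinom (q ^ s) n r * genBell s q r *
          ∏ i ∈ Finset.range (n - r),
            qBracket q ((j : ℝ) * (1 - s) + s * (m : ℝ) + s * (i : ℝ)) :=
  spivey_bell_general q s hq n m
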